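/- In any execution of algorithm Quadruple-Round against a 1-activating adversary: if the active stations in a double segment hold k packets in total, for k ≥ 0 with k ≠ 1, then the corresponding double phase takes at most 2k + 2 rounds; moreover, for every such k there exists a configuration of packets held by the active stations of the double segment for which the double phase takes exactly 2k + 2 rounds; and when k = 1 the corresponding double phase takes exactly three rounds. -/
import Mathlib


/-- Remove one packet from the queue of station `i` (stations of a segment are indexed
`0, 1, 2, 3`; `q i` is the number of packets pending at station `i`). -/
def deqQR (q : ℕ → ℕ) (i : ℕ) : ℕ → ℕ := fun j => if j = i then q j - 1 else q j

/-- The number of active stations of a segment. -/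
def activeCountQR (q : ℕ → ℕ) : ℕ :=
  (if q 0 = 0 then 0 else 1) + (if q 1 = 0 then 0 else 1) +
    (if q 2 = 0 then 0 else 1) + (if q 3 = 0 then 0 else 1)

/-- One iteration of a phase of algorithm Quadruple-Round, for a segment whose stations
currently hold the packet counts `q` (with at least one active station).  It returns the
list of the rounds of the iteration — each entry `some i` meaning that a packet of station
`i` is heard in that round and `none` meaning a void round (collision or silence) — and
the resulting packet counts.  In the first round all active stations of the segment
transmit: if only one station is active its packet is heard and the iteration ends; after
a collision the stations of the left pair (0 and 1) transmit in the second round: if both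
are active this is a collision and stations 0 and 1 then transmit singly in the third and
fourth rounds; if exactly one is active its packet is heard, ending the iteration; if the
second round is silent, the right-pair stations 2 and 3 transmit singly in the third and
fourth rounds. -/
def iterQR (q : ℕ → ℕ) : List (Option ℕ) × (ℕ → ℕ) :=
  if activeCountQR q = 1 then
    let i := if q 0 ≠ 0 then 0 else if q 1 ≠ 0 then 1 else if q 2 ≠ 0 then 2 else 3
    ([some i], deqQR q i)
  else if q 0 ≠ 0 ∧ q 1 ≠ 0 then ([none, none, some 0, some 1], deqQR (deqQR q 0) 1)
  else if q 0 ≠ 0 then ([none, some 0], deqQR q 0)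
  else if q 1 ≠ 0 then ([none, some 1], deqQR q 1)
  else ([none, none, some 2, some 3], deqQR (deqQR q 2) 3)

/-- The trace of a phase (fuelled version): iterations repeat until all stations of the
segment are passive, and a final silent round ends the phase. -/
def phaseTraceAux : ℕ → (ℕ → ℕ) → List (Option ℕ)
  | 0, _ => []
  | fuel + 1, q =>
    if q 0 = 0 ∧ q 1 = 0 ∧ q 2 = 0 ∧ q 3 = 0 then [none]
    else (iterQR q).1 ++ phaseTraceAux fuel (iterQR q).2

/-- The round-by-round trace of the phase processing a segment whose four stations hold
the packet counts `q`. -/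
def phaseTrace (q : ℕ → ℕ) : List (Option ℕ) :=
  phaseTraceAux (q 0 + q 1 + q 2 + q 3 + 1) q

/-- The number of rounds taken by the phase processing a segment with packet counts `q`. -/
def phaseLen (q : ℕ → ℕ) : ℕ := (phaseTrace q).length

/-- The number of rounds taken by the double phase processing a double segment whose eight
stations hold the packet counts `p 0, …, p 7` (the first four form the first segment, the
last four the second segment). -/
def doublePhaseLen (p : ℕ → ℕ) : ℕ :=
  phaseLen p + phaseLen (fun i => p (i + 4))

/-- if the active stations of a double segment hold `k` packets in total,
for `k ≥ 0` with `k ≠ 1`, then the corresponding double phase of Quadruple-Round takes at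
most `2k + 2` rounds, and for every such `k` some configuration of packets attains exactly
`2k + 2` rounds; when `k = 1`, the double phase takes exactly three rounds. -/


lemma iter_specQR (q : ℕ → ℕ) (h : ¬(q 0 = 0 ∧ q 1 = 0 ∧ q 2 = 0 ∧ q 3 = 0)) :
    (iterQR q).2 0 + (iterQR q).2 1 + (iterQR q).2 2 + (iterQR q).2 3 + 1
        ≤ q 0 + q 1 + q 2 + q 3 ∧
    (iterQR q).1.length +
        2 * ((iterQR q).2 0 + (iterQR q).2 1 + (iterQR q).2 2 + (iterQR q).2 3)
        ≤ 2 * (q 0 + q 1 + q 2 + q 3) := by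
  by_cases h0 : q 0 = 0 <;> by_cases h1 : q 1 = 0 <;> by_cases h2 : q 2 = 0 <;>
    by_cases h3 : q 3 = 0 <;>
    simp_all [iterQR, activeCountQR, deqQR] <;> omega

lemma len_leQR : ∀ (fuel : ℕ) (q : ℕ → ℕ), q 0 + q 1 + q 2 + q 3 + 1 ≤ fuel →
    (phaseTraceAux fuel q).length ≤ 2 * (q 0 + q 1 + q 2 + q 3) + 1
  | 0, q, h => absurd h (by omega)
  | fuel + 1, q, h => by
    by_cases hz : q 0 = 0 ∧ q 1 = 0 ∧ q 2 = 0 ∧ q 3 = 0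
    · simp [phaseTraceAux, hz]
    · have hs := iter_specQR q hz
      have hrec := len_leQR fuel (iterQR q).2 (by omega)
      rw [phaseTraceAux, if_neg hz, List.length_append]
      omega

def Q4 (a b c d : ℕ) : ℕ → ℕ := fun n =>
  if n = 0 then a else if n = 1 then b else if n = 2 then c else if n = 3 then d else 0

@[simp] lemma Q4_0 (a b c d : ℕ) : Q4 a b c d 0 = a := rfl
@[simp] lemma Q4_1 (a b c d : ℕ) : Q4 a b c d 1 = b := rfl
@[simp] lemma Q4_2 (a b c d : ℕ) : Q4 a b c d 2 = c := rfl
@[simp] lemma Q4_3 (a b c d : ℕ) : Q4 a b c d 3 = d := rfl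

lemma lenAQR : ∀ (m fuel : ℕ), 2 * m + 1 ≤ fuel →
    (phaseTraceAux fuel (Q4 m m 0 0)).length = 4 * m + 1
  | 0, fuel, h => by
    obtain ⟨f, rfl⟩ : ∃ f, fuel = f + 1 := ⟨fuel - 1, by omega⟩
    simp [phaseTraceAux]
  | m + 1, fuel, h => by
    obtain ⟨f, rfl⟩ : ∃ f, fuel = f + 1 := ⟨fuel - 1, by omega⟩
    have h2 : deqQR (deqQR (Q4 (m+1) (m+1) 0 0) 0) 1 = Q4 m m 0 0 := by
      funext j; simp only [deqQR, Q4]; split_ifs <;> omega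
    have hq : (iterQR (Q4 (m+1) (m+1) 0 0)) = ([none, none, some 0, some 1], Q4 m m 0 0) := by
      rw [iterQR]
      rw [if_neg (by simp [activeCountQR]), if_pos (by simp), h2]
    rw [phaseTraceAux, if_neg (by simp), hq, List.length_append]
    have := lenAQR m f (by omega)
    simp_all
    omega
  termination_by m => m

lemma lenBQR : ∀ (m fuel : ℕ), m + 3 ≤ fuel →
    (phaseTraceAux fuel (Q4 0 m 1 1)).length = 2 * m + 5
  | 0, fuel, h => by
    obtain ⟨f, rfl⟩ : ∃ f, fuel = f + 2 := ⟨fuel - 2, by omega⟩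
    have h2 : deqQR (deqQR (Q4 0 0 1 1) 2) 3 = Q4 0 0 0 0 := by
      funext j; simp only [deqQR, Q4]; split_ifs <;> omega
    have hq : (iterQR (Q4 0 0 1 1)) = ([none, none, some 2, some 3], Q4 0 0 0 0) := by
      rw [iterQR]
      rw [if_neg (by simp [activeCountQR]), if_neg (by simp), if_neg (by simp),
        if_neg (by simp), h2]
    rw [show f + 2 = (f + 1) + 1 from rfl, phaseTraceAux, if_neg (by simp), hq,
      List.length_append, phaseTraceAux]
    simp
  | m + 1, fuel, h => by
    obtain ⟨f, rfl⟩ : ∃ f, fuel = f + 1 := ⟨fuel - 1, by omega⟩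
    have h2 : deqQR (Q4 0 (m+1) 1 1) 1 = Q4 0 m 1 1 := by
      funext j; simp only [deqQR, Q4]; split_ifs <;> omega
    have hq : (iterQR (Q4 0 (m+1) 1 1)) = ([none, some 1], Q4 0 m 1 1) := by
      rw [iterQR]
      rw [if_neg (by simp [activeCountQR]), if_neg (by simp), if_neg (by simp),
        if_pos (by simp), h2]
    rw [phaseTraceAux, if_neg (by simp), hq, List.length_append]
    have := lenBQR m f (by omega)
    simp_all
    omega
  termination_by m => m

lemma phaseLen_sum0QR (q : ℕ → ℕ) (h : q 0 + q 1 + q 2 + q 3 = 0) : phaseLen q = 1 := by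
  have h0 : q 0 = 0 := by omega
  have h1 : q 1 = 0 := by omega
  have h2 : q 2 = 0 := by omega
  have h3 : q 3 = 0 := by omega
  rw [phaseLen, phaseTrace, h0, h1, h2, h3]
  simp [phaseTraceAux, h0, h1, h2, h3]

lemma phaseLen_sum1QR (q : ℕ → ℕ) (h : q 0 + q 1 + q 2 + q 3 = 1) : phaseLen q = 2 := by
  rw [phaseLen, phaseTrace]
  have hf : q 0 + q 1 + q 2 + q 3 + 1 = 2 := by omega
  rw [hf]
  have hc : (q 0 = 1 ∧ q 1 = 0 ∧ q 2 = 0 ∧ q 3 = 0) ∨ (q 0 = 0 ∧ q 1 = 1 ∧ q 2 = 0 ∧ q 3 = 0)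
      ∨ (q 0 = 0 ∧ q 1 = 0 ∧ q 2 = 1 ∧ q 3 = 0) ∨ (q 0 = 0 ∧ q 1 = 0 ∧ q 2 = 0 ∧ q 3 = 1) := by
    omega
  rcases hc with ⟨h0, h1, h2, h3⟩ | ⟨h0, h1, h2, h3⟩ | ⟨h0, h1, h2, h3⟩ | ⟨h0, h1, h2, h3⟩ <;>
    simp [phaseTraceAux, iterQR, activeCountQR, deqQR, h0, h1, h2, h3]


theorem quadruple_round_double_phase_length (k : ℕ) :
    (k ≠ 1 →
      (∀ p : ℕ → ℕ, (∀ i, 8 ≤ i → p i = 0) → (∑ i ∈ Finset.range 8, p i) = k →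
        doublePhaseLen p ≤ 2 * k + 2) ∧
      (∃ p : ℕ → ℕ, (∀ i, 8 ≤ i → p i = 0) ∧ (∑ i ∈ Finset.range 8, p i) = k ∧
        doublePhaseLen p = 2 * k + 2)) ∧
    (∀ p : ℕ → ℕ, (∀ i, 8 ≤ i → p i = 0) → (∑ i ∈ Finset.range 8, p i) = 1 →
      doublePhaseLen p = 3) := by
  refine ⟨fun hk => ⟨?_, ?_⟩, ?_⟩
  · intro p h8 hsum
    simp [Finset.sum_range_succ] at hsum
    have l1 : phaseLen p ≤ 2 * (p 0 + p 1 + p 2 + p 3) + 1 := len_leQR _ p (le_refl _)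
    have l2 : phaseLen (fun i => p (i + 4)) ≤ 2 * (p 4 + p 5 + p 6 + p 7) + 1 := by
      have := len_leQR _ (fun i => p (i + 4)) (le_refl _)
      norm_num at this ⊢
      exact this
    unfold doublePhaseLen
    omega
  · rcases Nat.even_or_odd k with ⟨m, rfl⟩ | ⟨m, rfl⟩
    · refine ⟨Q4 m m 0 0, ?_, ?_, ?_⟩
      · intro i hi; simp only [Q4]; split_ifs <;> omega
      · simp [Finset.sum_range_succ, Q4]
      · have e1 : phaseLen (Q4 m m 0 0) = 4 * m + 1 := by
          rw [phaseLen, phaseTrace]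
          exact lenAQR m _ (by simp; omega)
        have e2 : phaseLen (fun i => Q4 m m 0 0 (i + 4)) = 1 :=
          phaseLen_sum0QR _ (by norm_num [Q4])
        unfold doublePhaseLen
        rw [e1, e2]; omega
    · have hm : 1 ≤ m := by omega
      refine ⟨Q4 0 (2 * m - 1) 1 1, ?_, ?_, ?_⟩
      · intro i hi; simp only [Q4]; split_ifs <;> omega
      · simp [Finset.sum_range_succ, Q4]; omega
      · have e1 : phaseLen (Q4 0 (2 * m - 1) 1 1) = 2 * (2 * m - 1) + 5 := by
          rw [phaseLen, phaseTrace]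
          exact lenBQR _ _ (by simp)
        have e2 : phaseLen (fun i => Q4 0 (2 * m - 1) 1 1 (i + 4)) = 1 :=
          phaseLen_sum0QR _ (by norm_num [Q4])
        unfold doublePhaseLen
        rw [e1, e2]; omega
  · intro p h8 hsum
    simp [Finset.sum_range_succ] at hsum
    have hc : (p 0 + p 1 + p 2 + p 3 = 1 ∧ p 4 + p 5 + p 6 + p 7 = 0) ∨
        (p 0 + p 1 + p 2 + p 3 = 0 ∧ p 4 + p 5 + p 6 + p 7 = 1) := by omega
    unfold doublePhaseLen
    rcases hc with ⟨ha, hb⟩ | ⟨ha, hb⟩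
    · rw [phaseLen_sum1QR p ha, phaseLen_sum0QR _ (by simpa using hb)]
    · rw [phaseLen_sum0QR p ha, phaseLen_sum1QR _ (by simpa using hb)]
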